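/- Let p ≥ 3 and s1, s2 ≥ 1 be integers and let M′ be the (s1+s2)×(s1+s2) relation matrix defined in the context. Then det(M′) = (−1)^{s1+s2−1}·t(p,s1,s2). -/
import Mathlib


def cfun (s1 : ℕ) (C : ℚ) : ℕ → ℚ := fun k => if k = 0 then 0 else if k ≤ s1 then C else 1

lemma detML_sum_split (s1 s2 : ℕ) (hs2 : 1 ≤ s2) (F : ℕ → ℚ) :
    ∑ k ∈ Finset.range (s1 + s2), F k
      = F 0 + (∑ k ∈ Finset.range s1, F (k + 1))
        + ∑ k ∈ Finset.Ico (s1 + 1) (s1 + s2), F k := by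
  rw [← Nat.Ico_zero_eq_range,
    ← Finset.sum_Ico_consecutive F (Nat.zero_le (s1 + 1)) (by omega : s1 + 1 ≤ s1 + s2),
    Nat.Ico_zero_eq_range, Finset.sum_range_succ']
  ring

lemma detML_sum_main (s1 s2 : ℕ) (hs1 : 1 ≤ s1) (hs2 : 1 ≤ s2) (jn : ℕ) (hjn : jn < s1 + s2)
    (C A B d g : ℚ) :
    (∑ k ∈ Finset.range (s1 + s2),
      cfun s1 C k *
        (if k = 0 then (if jn = 0 then A else if jn ≤ s1 then B else 2)
         else if k ≤ s1 then (if jn = 0 then -1 else if jn = k then -2 else 0)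
         else if jn = 0 then -d else if jn ≤ s1 then -g else if jn = k then -2 else 0))
    = if jn = 0 then -(s1 : ℚ) * C - ((s2 : ℚ) - 1) * d
      else if jn ≤ s1 then -2 * C - ((s2 : ℚ) - 1) * g
      else -2 := by
  have hIcoCard : s1 + s2 - (s1 + 1) = s2 - 1 := by omega
  have h00 : cfun s1 C 0 = 0 := by simp [cfun]
  by_cases hj0 : jn = 0
  · subst hj0
    simp only [reduceIte]
    rw [detML_sum_split s1 s2 hs2]
    have h1 : ∀ k ∈ Finset.range s1,
        cfun s1 C (k + 1) * (if k + 1 = 0 then A else if k + 1 ≤ s1 then -1 else -d)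
        = -C := by
      intro k hk
      have hk' := Finset.mem_range.mp hk
      simp [cfun, show ¬(k + 1 = 0) from by omega, show k + 1 ≤ s1 from by omega]
    have h2 : ∀ k ∈ Finset.Ico (s1 + 1) (s1 + s2),
        cfun s1 C k * (if k = 0 then A else if k ≤ s1 then -1 else -d) = -d := by
      intro k hk
      have hk' := Finset.mem_Ico.mp hk
      simp [cfun, show ¬(k = 0) from by omega, show ¬(k ≤ s1) from by omega]
    rw [Finset.sum_congr rfl h1, Finset.sum_congr rfl h2, Finset.sum_const, Finset.sum_const,
      Finset.card_range, Nat.card_Ico, h00, zero_mul, hIcoCard]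
    simp only [nsmul_eq_mul]
    rw [Nat.cast_sub hs2]
    push_cast
    ring
  · simp only [if_neg hj0]
    by_cases hjle : jn ≤ s1
    · simp only [if_pos hjle]
      rw [detML_sum_split s1 s2 hs2]
      have h1 : ∀ k ∈ Finset.range s1,
          cfun s1 C (k + 1) *
            (if k + 1 = 0 then B else if k + 1 ≤ s1 then (if jn = k + 1 then -2 else 0) else -g)
          = if k = jn - 1 then -2 * C else 0 := by
        intro k hk
        have hk' := Finset.mem_range.mp hk
        by_cases hkj : jn = k + 1
        · rw [if_pos (show k = jn - 1 by omega)]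
          simp [cfun, show ¬(k + 1 = 0) from by omega, show k + 1 ≤ s1 from by omega,
            hkj, mul_comm]
        · rw [if_neg (show ¬(k = jn - 1) by omega)]
          simp [cfun, show ¬(k + 1 = 0) from by omega, show k + 1 ≤ s1 from by omega, hkj]
      have h2 : ∀ k ∈ Finset.Ico (s1 + 1) (s1 + s2),
          cfun s1 C k *
            (if k = 0 then B else if k ≤ s1 then (if jn = k then -2 else 0) else -g)
          = -g := by
        intro k hk
        have hk' := Finset.mem_Ico.mp hk
        simp [cfun, show ¬(k = 0) from by omega, show ¬(k ≤ s1) from by omega]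
      rw [Finset.sum_congr rfl h1, Finset.sum_congr rfl h2, Finset.sum_ite_eq',
        Finset.sum_const, Nat.card_Ico, h00, zero_mul, hIcoCard,
        if_pos (Finset.mem_range.mpr (show jn - 1 < s1 by omega))]
      simp only [nsmul_eq_mul]
      rw [Nat.cast_sub hs2]
      push_cast
      ring
    · simp only [if_neg hjle]
      rw [detML_sum_split s1 s2 hs2]
      have h1 : ∀ k ∈ Finset.range s1,
          cfun s1 C (k + 1) *
            (if k + 1 = 0 then 2
             else if k + 1 ≤ s1 then (if jn = k + 1 then -2 else 0)
             else if jn = k + 1 then -2 else 0)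
          = 0 := by
        intro k hk
        have hk' := Finset.mem_range.mp hk
        simp [cfun, show ¬(k + 1 = 0) from by omega, show k + 1 ≤ s1 from by omega,
          show ¬(jn = k + 1) from by omega]
      have h2 : ∀ k ∈ Finset.Ico (s1 + 1) (s1 + s2),
          cfun s1 C k *
            (if k = 0 then 2
             else if k ≤ s1 then (if jn = k then -2 else 0)
             else if jn = k then -2 else 0)
          = if k = jn then -2 else 0 := by
        intro k hk
        have hk' := Finset.mem_Ico.mp hk
        by_cases hkj : jn = k
        · rw [if_pos (show k = jn by omega)]
          simp [cfun, show ¬(k = 0) from by omega, show ¬(k ≤ s1) from by omega, hkj]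
        · rw [if_neg (show ¬(k = jn) by omega)]
          simp [cfun, show ¬(k = 0) from by omega, show ¬(k ≤ s1) from by omega, hkj]
      rw [Finset.sum_congr rfl h1, Finset.sum_congr rfl h2, Finset.sum_ite_eq',
        Finset.sum_const_zero, h00, zero_mul,
        if_pos (Finset.mem_Ico.mpr (show s1 + 1 ≤ jn ∧ jn < s1 + s2 by omega))]
      ring

lemma detML_aux (s1 s2 : ℕ) (hs1 : 1 ≤ s1) (hs2 : 1 ≤ s2) (A B d g : ℚ)
    (M : Matrix (Fin (s1 + s2)) (Fin (s1 + s2)) ℚ)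
    (hM : ∀ i j : Fin (s1 + s2), M i j =
      if (i : ℕ) = 0 then
        (if (j : ℕ) = 0 then A else if (j : ℕ) ≤ s1 then B else 2)
      else if (i : ℕ) ≤ s1 then
        (if (j : ℕ) = 0 then -1 else if (j : ℕ) = (i : ℕ) then -2 else 0)
      else
        if (j : ℕ) = 0 then -d else if (j : ℕ) ≤ s1 then -g
        else if (j : ℕ) = (i : ℕ) then -2 else 0) :
    M.det = (A - (s1 : ℚ) * ((B - ((s2 : ℚ) - 1) * g) / 2) - ((s2 : ℚ) - 1) * d)
      * (-2) ^ (s1 + s2 - 1) := by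
  set C : ℚ := (B - ((s2 : ℚ) - 1) * g) / 2 with hC
  set S : ℚ := A - (s1 : ℚ) * C - ((s2 : ℚ) - 1) * d with hS
  set L : Matrix (Fin (s1 + s2)) (Fin (s1 + s2)) ℚ :=
    fun i j => (if i = j then 1 else 0) + (if (i : ℕ) = 0 then cfun s1 C (j : ℕ) else 0)
    with hLdef
  set T : Matrix (Fin (s1 + s2)) (Fin (s1 + s2)) ℚ :=
    fun i j => if (i : ℕ) = 0 then (if (j : ℕ) = 0 then S else 0) else M i j with hTdef
  have hdetL : L.det = 1 := by
    have ht : L.BlockTriangular id := by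
      intro i j hij
      have hij' : (j : ℕ) < (i : ℕ) := hij
      simp only [hLdef]
      rw [if_neg (show ¬(i = j) from by intro h; subst h; omega),
        if_neg (show ¬((i : ℕ) = 0) from by omega), add_zero]
    rw [Matrix.det_of_upperTriangular ht]
    apply Finset.prod_eq_one
    intro i _
    by_cases h : (i : ℕ) = 0
    · simp [hLdef, h, cfun]
    · simp [hLdef, h]
  have hGsum : ∀ j : Fin (s1 + s2),
      (∑ k : Fin (s1 + s2), cfun s1 C (k : ℕ) * M k j)
      = if (j : ℕ) = 0 then -(s1 : ℚ) * C - ((s2 : ℚ) - 1) * d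
        else if (j : ℕ) ≤ s1 then -2 * C - ((s2 : ℚ) - 1) * g
        else -2 := by
    intro j
    rw [← detML_sum_main s1 s2 hs1 hs2 (j : ℕ) j.isLt C A B d g,
      ← Fin.sum_univ_eq_sum_range]
    exact Finset.sum_congr rfl fun k _ => by rw [hM]
  have hLM : L * M = T := by
    ext i j
    rw [Matrix.mul_apply]
    by_cases hi : (i : ℕ) = 0
    · have hL' : ∀ k, L i k * M k j
          = (if i = k then (1 : ℚ) else 0) * M k j + cfun s1 C (k : ℕ) * M k j := by
        intro k
        simp only [hLdef]
        rw [if_pos hi, add_mul]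
      rw [Finset.sum_congr rfl fun k _ => hL' k, Finset.sum_add_distrib]
      simp only [ite_mul, one_mul, zero_mul, Finset.sum_ite_eq, Finset.mem_univ, if_true]
      rw [hGsum j, hM i j, if_pos hi]
      simp only [hTdef]
      rw [if_pos hi]
      by_cases hj0 : (j : ℕ) = 0
      · rw [if_pos hj0, if_pos hj0, if_pos hj0, hS]; ring
      · rw [if_neg hj0, if_neg hj0, if_neg hj0]
        by_cases hjle : (j : ℕ) ≤ s1
        · rw [if_pos hjle, if_pos hjle, hC]; ring
        · rw [if_neg hjle, if_neg hjle]; ring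
    · have hL' : ∀ k, L i k = if i = k then (1 : ℚ) else 0 := by
        intro k
        simp only [hLdef]
        rw [if_neg hi, add_zero]
      rw [Finset.sum_congr rfl fun k _ => by rw [hL' k]]
      simp only [ite_mul, one_mul, zero_mul, Finset.sum_ite_eq, Finset.mem_univ, if_true]
      simp only [hTdef]
      rw [if_neg hi]
  have hdetT : T.det = S * (-2) ^ (s1 + s2 - 1) := by
    have ht : T.BlockTriangular OrderDual.toDual := by
      intro i j hij
      have hij' : (i : ℕ) < (j : ℕ) := hij
      simp only [hTdef]
      by_cases h0 : (i : ℕ) = 0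
      · rw [if_pos h0, if_neg (show ¬((j : ℕ) = 0) from by omega)]
      · rw [if_neg h0, hM]
        rw [if_neg h0]
        by_cases h1 : (i : ℕ) ≤ s1
        · rw [if_pos h1, if_neg (show ¬((j : ℕ) = 0) from by omega),
            if_neg (show ¬((j : ℕ) = (i : ℕ)) from by omega)]
        · rw [if_neg h1, if_neg (show ¬((j : ℕ) = 0) from by omega),
            if_neg (show ¬((j : ℕ) ≤ s1) from by omega),
            if_neg (show ¬((j : ℕ) = (i : ℕ)) from by omega)]
    rw [Matrix.det_of_lowerTriangular T ht]
    have i0 : Fin (s1 + s2) := ⟨0, by omega⟩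
    rw [← Finset.mul_prod_erase Finset.univ _ (Finset.mem_univ (⟨0, by omega⟩ : Fin (s1 + s2)))]
    have h00 : T (⟨0, by omega⟩ : Fin (s1 + s2)) ⟨0, by omega⟩ = S := by
      simp [hTdef]
    have hrest : ∀ i ∈ Finset.univ.erase (⟨0, by omega⟩ : Fin (s1 + s2)), T i i = -2 := by
      intro i hi
      have hne : ¬((i : ℕ) = 0) := by
        have h := (Finset.mem_erase.mp hi).1
        intro h'
        exact h (Fin.ext h')
      simp only [hTdef]
      rw [if_neg hne, hM, if_neg hne]
      by_cases h1 : (i : ℕ) ≤ s1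
      · rw [if_pos h1, if_neg hne, if_pos rfl]
      · rw [if_neg h1, if_neg hne, if_neg (show ¬((i : ℕ) ≤ s1) from h1), if_pos rfl]
    rw [Finset.prod_congr rfl hrest, Finset.prod_const, h00,
      Finset.card_erase_of_mem (Finset.mem_univ _), Finset.card_univ, Fintype.card_fin]
  have hfin : L.det * M.det = T.det := by rw [← Matrix.det_mul, hLM]
  rw [hdetL, one_mul] at hfin
  rw [hfin, hdetT]




/-- Shifted sequence `bSeq s1 n = b^{(s1)}_{n-2}`. -/
def bSeq (s1 : ℕ) : ℕ → ℤ
  | 0 => 2 ^ s1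
  | 1 => if s1 = 0 then 1 else 2 ^ (s1 - 1) * (s1 + 2)
  | n + 2 => bSeq s1 (n + 1) + bSeq s1 n


/-- `tVal p s1 s2 = 2^{s2-1} (2 b^{(s1)}_{2p-3} + s2 b^{(s1)}_{2p-4})`. -/
def tVal (p s1 s2 : ℕ) : ℤ :=
  2 ^ (s2 - 1) * (2 * bSeq s1 (2 * p - 1) + (s2 : ℤ) * bSeq s1 (2 * p - 2))


/-- The quantity `d = (s1+2) F_{2p-2} - F_{2p-4}`. -/
def dVal (p s1 : ℕ) : ℤ := ((s1 : ℤ) + 2) * Nat.fib (2 * p - 2) - Nat.fib (2 * p - 4)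

/-- The quantity `e = F_{2p-6} - (s1+2) F_{2p-4}`. -/
def eVal (p s1 : ℕ) : ℤ := (Nat.fib (2 * p - 6) : ℤ) - ((s1 : ℤ) + 2) * Nat.fib (2 * p - 4)

/-- The quantity `f = s2 + 2`. -/
def fVal (s2 : ℕ) : ℤ := (s2 : ℤ) + 2

/-- The quantity `g = F_{2p-2}`. -/
def gVal (p : ℕ) : ℤ := Nat.fib (2 * p - 2)

/-- The quantity `h = -F_{2p-4}`. -/
def hVal (p : ℕ) : ℤ := -(Nat.fib (2 * p - 4) : ℤ)

/-- The `(s1+s2) × (s1+s2)` relation matrix `M′` (rows and columns indexed by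
`0, …, s1+s2-1`, where index `0` corresponds to column/row `1` of the paper,
indices `1, …, s1` to columns/rows `2, …, s1+1`, and indices `s1+1, …, s1+s2-1`
to columns/rows `s1+2, …, s1+s2`). -/
def Mrel (p s1 s2 : ℕ) : Matrix (Fin (s1 + s2)) (Fin (s1 + s2)) ℤ :=
  fun i j =>
    if (i : ℕ) = 0 then
      if (j : ℕ) = 0 then
        2 * (dVal p s1 * fVal s2 + eVal p s1) - dVal p s1
      else if (j : ℕ) ≤ s1 then
        2 * (gVal p * fVal s2 + hVal p) - gVal p
      else 2
    else if (i : ℕ) ≤ s1 then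
      if (j : ℕ) = 0 then -1 else if j = i then -2 else 0
    else
      if (j : ℕ) = 0 then -dVal p s1
      else if (j : ℕ) ≤ s1 then -gVal p
      else if j = i then -2 else 0


lemma bSeq_closed (s1 : ℕ) (hs1 : 1 ≤ s1) :
    ∀ m : ℕ, bSeq s1 (m + 1)
      = 2 ^ (s1 - 1) * ((s1 : ℤ) + 2) * Nat.fib (m + 1) + 2 ^ s1 * Nat.fib m := by
  intro m
  induction m using Nat.twoStepInduction with
  | zero =>
    simp [bSeq, show ¬(s1 = 0) from by omega]
  | one =>
    show bSeq s1 1 + bSeq s1 0 = _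
    simp [bSeq, show ¬(s1 = 0) from by omega]
  | more n ih1 ih2 =>
    show bSeq s1 (n + 2) + bSeq s1 (n + 1) = _
    rw [ih1, ih2]
    have hf : (Nat.fib (n + 3) : ℤ) = Nat.fib (n + 2) + Nat.fib (n + 1) := by
      have := Nat.fib_add_two (n := n + 1)
      push_cast [this]
      ring
    rw [hf]
    have hf2 : (Nat.fib (n + 2) : ℤ) = Nat.fib (n + 1) + Nat.fib n := by
      push_cast [Nat.fib_add_two]
      ring
    rw [hf2]
    ring

/-- Let `p ≥ 3` and `s1, s2 ≥ 1`, and let `M′` be the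
`(s1+s2) × (s1+s2)` relation matrix. Then
`det(M′) = (-1)^{s1+s2-1} · t(p,s1,s2)`. -/

theorem det_Mrel (p s1 s2 : ℕ) (hp : 3 ≤ p) (hs1 : 1 ≤ s1) (hs2 : 1 ≤ s2) :
    (Mrel p s1 s2).det = (-1) ^ (s1 + s2 - 1) * tVal p s1 s2 := by
  obtain ⟨m, rfl⟩ : ∃ m, p = m + 3 := ⟨p - 3, by omega⟩
  obtain ⟨u, rfl⟩ : ∃ u, s1 = u + 1 := ⟨s1 - 1, by omega⟩
  obtain ⟨v, rfl⟩ : ∃ v, s2 = v + 1 := ⟨s2 - 1, by omega⟩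
  have hmap : ∀ i j : Fin ((u + 1) + (v + 1)),
      ((Mrel (m + 3) (u + 1) (v + 1)).map (fun x : ℤ => (x : ℚ))) i j =
      if (i : ℕ) = 0 then
        (if (j : ℕ) = 0 then
          ((2 * (dVal (m + 3) (u + 1) * fVal (v + 1) + eVal (m + 3) (u + 1))
              - dVal (m + 3) (u + 1) : ℤ) : ℚ)
         else if (j : ℕ) ≤ (u + 1) then
          ((2 * (gVal (m + 3) * fVal (v + 1) + hVal (m + 3)) - gVal (m + 3) : ℤ) : ℚ)
         else 2)
      else if (i : ℕ) ≤ (u + 1) then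
        (if (j : ℕ) = 0 then -1 else if (j : ℕ) = (i : ℕ) then -2 else 0)
      else
        if (j : ℕ) = 0 then -((dVal (m + 3) (u + 1) : ℤ) : ℚ)
        else if (j : ℕ) ≤ (u + 1) then -((gVal (m + 3) : ℤ) : ℚ)
        else if (j : ℕ) = (i : ℕ) then -2 else 0 := by
    intro i j
    simp only [Matrix.map_apply, Mrel, Fin.ext_iff]
    split_ifs <;> push_cast <;> ring
  have key := detML_aux (u + 1) (v + 1) (by omega) (by omega) _ _ _ _ _ hmap
  have hdet : (((Mrel (m + 3) (u + 1) (v + 1)).det : ℤ) : ℚ)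
      = ((Mrel (m + 3) (u + 1) (v + 1)).map (fun x : ℤ => (x : ℚ))).det :=
    RingHom.map_det (Int.castRingHom ℚ) _
  have hgoal : (((Mrel (m + 3) (u + 1) (v + 1)).det : ℤ) : ℚ)
      = (((-1 : ℤ) ^ ((u + 1) + (v + 1) - 1) * tVal (m + 3) (u + 1) (v + 1) : ℤ) : ℚ) := by
    rw [hdet, key]
    have hb5 : bSeq (u + 1) (2 * m + 5)
        = 2 ^ ((u + 1) - 1) * (((u + 1 : ℕ) : ℤ) + 2) * (Nat.fib (2 * m + 5) : ℤ)
          + 2 ^ (u + 1) * (Nat.fib (2 * m + 4) : ℤ) := bSeq_closed (u + 1) (by omega) (2 * m + 4)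
    have hb4 : bSeq (u + 1) (2 * m + 4)
        = 2 ^ ((u + 1) - 1) * (((u + 1 : ℕ) : ℤ) + 2) * (Nat.fib (2 * m + 4) : ℤ)
          + 2 ^ (u + 1) * (Nat.fib (2 * m + 3) : ℤ) := bSeq_closed (u + 1) (by omega) (2 * m + 3)
    simp only [tVal, dVal, eVal, fVal, gVal, hVal]
    simp only [show 2 * (m + 3) - 1 = 2 * m + 5 from by omega,
      show 2 * (m + 3) - 2 = 2 * m + 4 from by omega,
      show 2 * (m + 3) - 4 = 2 * m + 2 from by omega,
      show 2 * (m + 3) - 6 = 2 * m from by omega,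
      show (v + 1) - 1 = v from by omega,
      show (u + 1) - 1 = u from by omega,
      show (u + 1) + (v + 1) - 1 = u + v + 1 from by omega]
    rw [show bSeq (u + 1) (2 * m + 5)
        = 2 ^ u * (((u + 1 : ℕ) : ℤ) + 2) * (Nat.fib (2 * m + 5) : ℤ)
          + 2 ^ (u + 1) * (Nat.fib (2 * m + 4) : ℤ) from hb5,
      show bSeq (u + 1) (2 * m + 4)
        = 2 ^ u * (((u + 1 : ℕ) : ℤ) + 2) * (Nat.fib (2 * m + 4) : ℤ)
          + 2 ^ (u + 1) * (Nat.fib (2 * m + 3) : ℤ) from hb4]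
    rw [show ((-2 : ℚ)) = (-1) * 2 from by norm_num, mul_pow]
    push_cast
    have hf : ∀ k : ℕ, (Nat.fib (k + 2) : ℚ) = Nat.fib (k + 1) + Nat.fib k := by
      intro k
      push_cast [Nat.fib_add_two]
      ring
    have h5 : (Nat.fib (2 * m + 5) : ℚ) = Nat.fib (2 * m + 4) + Nat.fib (2 * m + 3) :=
      hf (2 * m + 3)
    have h4 : (Nat.fib (2 * m + 4) : ℚ) = Nat.fib (2 * m + 3) + Nat.fib (2 * m + 2) :=
      hf (2 * m + 2)
    have h3 : (Nat.fib (2 * m + 3) : ℚ) = Nat.fib (2 * m + 2) + Nat.fib (2 * m + 1) :=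
      hf (2 * m + 1)
    have h2 : (Nat.fib (2 * m + 2) : ℚ) = Nat.fib (2 * m + 1) + Nat.fib (2 * m) :=
      hf (2 * m)
    rw [h5, h4, h3, h2]
    ring
  exact_mod_cast hgoal
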